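/- Let K, a be real numbers with 0 ≤ a ≤ K, and let p = (p₋₂, p₋₁, p₀, p₁, p₂) be nonnegative reals summing to K with p₋₂ + p₋₁ + p₁ + p₂ = a. Then f₂(p) = ∑_{x≠y} w(x,y) p_x p_y ≤ 2Ka − (5/6)a², where w(x,y) = 1 if 1 ≤ |x−y| ≤ 2 and w(x,y) = 2 if 3 ≤ |x−y| ≤ 4. Equality holds when p = (a/3, a/6, K−a, a/6, a/3). -/
import Mathlib


/-- Weight function of the distance matrix `D₂` for magnitude `s = 2`. -/
noncomputable def w2 (x y : ℤ) : ℝ :=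
  if 1 ≤ |x - y| ∧ |x - y| ≤ 2 then 1
  else if 3 ≤ |x - y| ∧ |x - y| ≤ 4 then 2
  else 0

/-- `f₂(p) = p D₂ pᵀ` with coordinates indexed by `{-2,…,2}`. -/
noncomputable def f2 (p : ℤ → ℝ) : ℝ :=
  ∑ x ∈ Finset.Icc (-2 : ℤ) 2, ∑ y ∈ Finset.Icc (-2 : ℤ) 2, w2 x y * p x * p y

lemma icc_eq' : Finset.Icc (-2:ℤ) 2 = {-2,-1,0,1,2} := by decide

lemma f2_eq' (p : ℤ → ℝ) : f2 p =
    2 * (p (-2) * p (-1) + p (-2) * p 0 + 2 * p (-2) * p 1 + 2 * p (-2) * p 2 +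
      p (-1) * p 0 + p (-1) * p 1 + 2 * p (-1) * p 2 + p 0 * p 1 + p 0 * p 2 +
      p 1 * p 2) := by
  simp only [f2, icc_eq', Finset.sum_insert, Finset.mem_insert, Finset.sum_singleton,
    Finset.mem_singleton, w2]
  norm_num
  ring

theorem stmt6 (K a : ℝ) (p : ℤ → ℝ) (ha0 : 0 ≤ a) (haK : a ≤ K)
    (hpos : ∀ x ∈ Finset.Icc (-2 : ℤ) 2, 0 ≤ p x)
    (hsum : ∑ x ∈ Finset.Icc (-2 : ℤ) 2, p x = K)
    (hwt : ∑ x ∈ (Finset.Icc (-2 : ℤ) 2).erase 0, p x = a) :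
    f2 p ≤ 2 * K * a - (5 / 6) * a ^ 2 ∧
    f2 (fun x => if x = 0 then K - a else if |x| = 1 then a / 6 else a / 3) =
      2 * K * a - (5 / 6) * a ^ 2 := by
  have hd := hpos (-2) (by decide)
  have hb := hpos (-1) (by decide)
  have h0 := hpos 0 (by decide)
  have hc := hpos 1 (by decide)
  have he := hpos 2 (by decide)
  have hwt' : a + p 0 = K := by
    rw [← hwt, ← hsum]
    exact Finset.sum_erase_add _ _ (by decide)
  rw [icc_eq'] at hsum
  norm_num [Finset.sum_insert, Finset.mem_insert, Finset.sum_singleton] at hsum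
  constructor
  · rw [f2_eq']
    nlinarith [sq_nonneg (7 * p (-1) + p 1 + p (-2) - 5 * p 2),
      sq_nonneg (4 * p 1 - 3 * p (-2) + p 2), sq_nonneg (p (-2) - p 2)]
  · rw [f2_eq']
    norm_num
    ring
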